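/- arXiv:2110.15735 — 3 statements merged into one kernel-verified Lean document; each statement's English description precedes it below -/
import Mathlib

section
/- Let 1 < q ≤ 2 and let a, b be vectors in ℝ^n. Then ∫₀¹ s‖s·a + (1−s)·b‖^(2−q) ds ≥ 2^(−6) · max(‖a‖, ‖b‖)^(2−q). -/
open MeasureTheory

lemma helper_int (f : ℝ → ℝ) (hf : Continuous f)
    (hfnn : ∀ s ∈ Set.Icc (0:ℝ) 1, 0 ≤ f s)
    (c d : ℝ) (h0c : 0 ≤ c) (hcd : c ≤ d) (hd1 : d ≤ 1) (K : ℝ)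
    (hlow : ∀ s ∈ Set.Icc c d, s * K ≤ f s) :
    (d^2 - c^2)/2 * K ≤ ∫ s in (0:ℝ)..1, f s := by
  have hi : ∀ u v : ℝ, IntervalIntegrable f volume u v := fun u v => hf.intervalIntegrable u v
  have hsplit : (∫ s in (0:ℝ)..1, f s) =
      (∫ s in (0:ℝ)..c, f s) + (∫ s in c..d, f s) + (∫ s in d..1, f s) := by
    rw [intervalIntegral.integral_add_adjacent_intervals (hi 0 c) (hi c d),
      intervalIntegral.integral_add_adjacent_intervals (hi 0 d) (hi d 1)]
  have h1 : 0 ≤ ∫ s in (0:ℝ)..c, f s :=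
    intervalIntegral.integral_nonneg h0c (fun u hu => hfnn u ⟨hu.1, le_trans hu.2 (hcd.trans hd1)⟩)
  have h3 : 0 ≤ ∫ s in d..1, f s :=
    intervalIntegral.integral_nonneg hd1 (fun u hu => hfnn u ⟨le_trans (h0c.trans hcd) hu.1, hu.2⟩)
  have h2 : (d^2 - c^2)/2 * K ≤ ∫ s in c..d, f s := by
    have : (∫ s in c..d, s * K) ≤ ∫ s in c..d, f s := by
      apply intervalIntegral.integral_mono_on hcd _ (hi c d) hlow
      exact (continuous_id.mul continuous_const).intervalIntegrable c d
    calc (d^2 - c^2)/2 * K = (∫ s in c..d, s * K) := by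
          rw [intervalIntegral.integral_mul_const, integral_id]
      _ ≤ _ := this
  linarith [hsplit, h1, h2, h3]

theorem stmt_0 (n : ℕ) (q : ℝ) (hq1 : 1 < q) (hq2 : q ≤ 2)
    (a b : EuclideanSpace ℝ (Fin n)) :
    (∫ s in (0:ℝ)..1, s * ‖s • a + (1 - s) • b‖ ^ (2 - q)) ≥
      2 ^ (-6 : ℝ) * max ‖a‖ ‖b‖ ^ (2 - q) := by
  set p := 2 - q with hpdef
  have hp0 : 0 ≤ p := by simp only [hpdef]; linarith
  have hp1 : p ≤ 1 := by simp only [hpdef]; linarith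
  set M := max ‖a‖ ‖b‖ with hMdef
  have hM0 : 0 ≤ M := le_trans (norm_nonneg a) (le_max_left _ _)
  have hcontv : Continuous fun s : ℝ => s • a + (1 - s) • b :=
    (continuous_id.smul continuous_const).add
      ((continuous_const.sub continuous_id).smul continuous_const)
  have hcont : Continuous fun s : ℝ => s * ‖s • a + (1 - s) • b‖ ^ p :=
    continuous_id.mul (hcontv.norm.rpow_const (fun x => Or.inr hp0))
  have hfnn : ∀ s ∈ Set.Icc (0:ℝ) 1, 0 ≤ s * ‖s • a + (1 - s) • b‖ ^ p :=
    fun s hs => mul_nonneg hs.1 (Real.rpow_nonneg (norm_nonneg _) p)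
  have hKnn : 0 ≤ (M/2)^p := Real.rpow_nonneg (by linarith) p
  have key : 1/32 * (M/2)^p ≤ ∫ s in (0:ℝ)..1, s * ‖s • a + (1 - s) • b‖ ^ p := by
    rcases le_total ‖b‖ ‖a‖ with h | h
    · have hMa : M = ‖a‖ := max_eq_left h
      have hlow : ∀ s ∈ Set.Icc (3/4:ℝ) 1,
          s * (M/2)^p ≤ s * ‖s • a + (1 - s) • b‖ ^ p := by
        intro s hs
        have hnorm : M/2 ≤ ‖s • a + (1 - s) • b‖ := by
          have h1 : ‖s • a‖ - ‖(1 - s) • b‖ ≤ ‖s • a + (1 - s) • b‖ := by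
            have := norm_sub_norm_le (s • a) (-((1 - s) • b))
            simpa [sub_neg_eq_add] using this
          have h2 : ‖s • a‖ = s * ‖a‖ := by
            rw [norm_smul, Real.norm_of_nonneg (by linarith [hs.1])]
          have h3 : ‖(1 - s) • b‖ = (1 - s) * ‖b‖ := by
            rw [norm_smul, Real.norm_of_nonneg (by linarith [hs.2])]
          rw [h2, h3] at h1
          nlinarith [hs.1, hs.2, norm_nonneg b]
        exact mul_le_mul_of_nonneg_left
          (Real.rpow_le_rpow (by linarith) hnorm hp0) (by linarith [hs.1])
      have := helper_int _ hcont hfnn (3/4) 1 (by norm_num) (by norm_num) le_rfl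
        ((M/2)^p) hlow
      nlinarith [hKnn]
    · have hMb : M = ‖b‖ := max_eq_right h
      have hlow : ∀ s ∈ Set.Icc (0:ℝ) (1/4),
          s * (M/2)^p ≤ s * ‖s • a + (1 - s) • b‖ ^ p := by
        intro s hs
        have hnorm : M/2 ≤ ‖s • a + (1 - s) • b‖ := by
          have h1 : ‖(1 - s) • b‖ - ‖s • a‖ ≤ ‖s • a + (1 - s) • b‖ := by
            have := norm_sub_norm_le ((1 - s) • b) (-(s • a))
            simpa [sub_neg_eq_add, add_comm] using this
          have h2 : ‖s • a‖ = s * ‖a‖ := by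
            rw [norm_smul, Real.norm_of_nonneg hs.1]
          have h3 : ‖(1 - s) • b‖ = (1 - s) * ‖b‖ := by
            rw [norm_smul, Real.norm_of_nonneg (by linarith [hs.2])]
          rw [h2, h3] at h1
          nlinarith [hs.1, hs.2, norm_nonneg a]
        exact mul_le_mul_of_nonneg_left
          (Real.rpow_le_rpow (by linarith) hnorm hp0) hs.1
      have := helper_int _ hcont hfnn 0 (1/4) le_rfl (by norm_num) (by norm_num)
        ((M/2)^p) hlow
      nlinarith [hKnn]
  have hsplitK : (M/2)^p = M^p / 2^p := Real.div_rpow hM0 (by norm_num : (0:ℝ) ≤ 2) p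
  have h2p : (2:ℝ)^p ≤ 2 := by
    calc (2:ℝ)^p ≤ (2:ℝ)^(1:ℝ) := Real.rpow_le_rpow_of_exponent_le (by norm_num) hp1
      _ = 2 := Real.rpow_one 2
  have h2ppos : (0:ℝ) < 2^p := Real.rpow_pos_of_pos (by norm_num) p
  have hMp : 0 ≤ M^p := Real.rpow_nonneg hM0 p
  have hK2 : M^p / 2 ≤ (M/2)^p := by
    rw [hsplitK]; exact div_le_div_of_nonneg_left hMp h2ppos h2p
  have h26 : (2:ℝ)^(-6:ℝ) = 1/64 := by
    rw [show (-6:ℝ) = ((-6:ℤ):ℝ) by norm_num, Real.rpow_intCast]; norm_num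
  rw [ge_iff_le, h26]
  calc 1/64 * M^p = 1/32 * (M^p/2) := by ring
    _ ≤ 1/32 * (M/2)^p := by linarith
    _ ≤ _ := key
end

section
/- Let p ≥ 2 and q its conjugate exponent, γ = q(q−1)/8, and define B : ℝ^{N₁} × ℝ^{N₂} → [0,∞) by B(η,ζ) = (1/2)(‖η‖^p + ‖ζ‖^q + γ(2/p·‖η‖^p + (2/q − 1)‖ζ‖^q)) on the region R₂ = {(η,ζ) : ‖η‖^p > ‖ζ‖^q, ζ ≠ 0}. Then for every (η,ζ) ∈ R₂ and every ω = (ω₁, ω₂) ∈ ℝ^{N₁} × ℝ^{N₂}, the Hessian quadratic form of B at (η,ζ) satisfies ⟨Hess B(η,ζ)ω, ω⟩ ≥ (1/2)((p−1)‖η‖^(p−2)‖ω₁‖² + (q−1)‖ζ‖^(q−2)‖ω₂‖²). -/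
/-!
Away from the origin `‖·‖ ^ s` is smooth with Hessian
`s ‖x‖^(s-2) ⟪u, v⟫ + s (s-2) ‖x‖^(s-4) ⟪x, u⟫ ⟪x, v⟫`. By Cauchy–Schwarz its quadratic form lies
between `s ‖x‖^(s-2) ‖v‖²` and `s (s-1) ‖x‖^(s-2) ‖v‖²`, so it is at least `(s-1) ‖x‖^(s-2) ‖v‖²`
whenever `s ≥ 1`. The Bellman function is `a ‖η‖^p + b ‖ζ‖^q` with `a = 1/2 + γ/p` and
`b = 1/2 + γ (2/q - 1)/2`; its Hessian is block diagonal, and both weights are at least `1/2`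
because `γ ≥ 0` and `q ≤ 2`.
-/

open Real ContinuousLinearMap

theorem ContinuousLinearMap.iteratedFDeriv_comp_right_of_contDiffAt
    {𝕜 E F G : Type*} [NontriviallyNormedField 𝕜] [NormedAddCommGroup E] [NormedSpace 𝕜 E]
    [NormedAddCommGroup F] [NormedSpace 𝕜 F] [NormedAddCommGroup G] [NormedSpace 𝕜 G]
    (g : G →L[𝕜] E) {f : E → F} {x : G} {i : ℕ} (hf : ContDiffAt 𝕜 i f (g x)) :
    iteratedFDeriv 𝕜 i (f ∘ g) x =
      (iteratedFDeriv 𝕜 i f (g x)).compContinuousLinearMap fun _ => g := by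
  obtain ⟨u, hu, hxu, hfu⟩ := ContDiffWithinAt.contDiffOn' (s := Set.univ) le_rfl (by simp) hf
  simp only [Set.insert_eq_of_mem (Set.mem_univ _), Set.univ_inter] at hfu
  have hgu : IsOpen (g ⁻¹' u) := hu.preimage g.continuous
  rw [← iteratedFDerivWithin_of_isOpen i hu hxu, ← iteratedFDerivWithin_of_isOpen i hgu hxu]
  exact g.iteratedFDerivWithin_comp_right hfu hu.uniqueDiffOn hgu.uniqueDiffOn hxu le_rfl

theorem iteratedFDeriv_fst_add_snd_apply
    {𝕜 E F H : Type*} [NontriviallyNormedField 𝕜] [NormedAddCommGroup E] [NormedSpace 𝕜 E]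
    [NormedAddCommGroup F] [NormedSpace 𝕜 F] [NormedAddCommGroup H] [NormedSpace 𝕜 H]
    {f : E → H} {g : F → H} {x : E × F} {i : ℕ}
    (hf : ContDiffAt 𝕜 i f x.1) (hg : ContDiffAt 𝕜 i g x.2) (m : Fin i → E × F) :
    iteratedFDeriv 𝕜 i (fun z => f z.1 + g z.2) x m =
      iteratedFDeriv 𝕜 i f x.1 (fun j => (m j).1) +
        iteratedFDeriv 𝕜 i g x.2 (fun j => (m j).2) := by
  have hf' : ContDiffAt 𝕜 i (f ∘ fst 𝕜 E F) x := hf.comp x (fst 𝕜 E F).contDiff.contDiffAt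
  have hg' : ContDiffAt 𝕜 i (g ∘ snd 𝕜 E F) x := hg.comp x (snd 𝕜 E F).contDiff.contDiffAt
  rw [show (fun z : E × F => f z.1 + g z.2) = f ∘ fst 𝕜 E F + g ∘ snd 𝕜 E F from rfl,
    iteratedFDeriv_add_apply hf' hg', (fst 𝕜 E F).iteratedFDeriv_comp_right_of_contDiffAt hf,
    (snd 𝕜 E F).iteratedFDeriv_comp_right_of_contDiffAt hg]
  rfl

theorem le_two_of_two_le_of_one_div_add_one_div_eq_one {p q : ℝ} (hp : 2 ≤ p) (hq : 0 < q)
    (hpq : 1 / p + 1 / q = 1) : q ≤ 2 := by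
  have : 1 / 2 ≤ 1 / q := by linarith [one_div_le_one_div_of_le two_pos hp]
  rwa [one_div_le_one_div two_pos hq] at this

section NormRpow

variable {E : Type*} [NormedAddCommGroup E] [InnerProductSpace ℝ E]

theorem contDiffAt_norm_rpow_of_ne_zero {n : WithTop ℕ∞} {x : E} (hx : x ≠ 0) (s : ℝ) :
    ContDiffAt ℝ n (fun y : E => ‖y‖ ^ s) x :=
  (contDiffAt_norm ℝ hx).rpow_const_of_ne (norm_ne_zero_iff.2 hx)

theorem hasFDerivAt_norm_rpow_of_ne_zero {x : E} (hx : x ≠ 0) (s : ℝ) :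
    HasFDerivAt (fun y : E => ‖y‖ ^ s) ((s * ‖x‖ ^ (s - 2)) • innerSL ℝ x) x := by
  apply HasStrictFDerivAt.hasFDerivAt
  convert (hasStrictFDerivAt_norm_sq x).rpow_const (p := s / 2) (by simp [hx]) using 0
  simp_rw [← Real.rpow_natCast_mul (norm_nonneg _), ← Nat.cast_smul_eq_nsmul ℝ, smul_smul]
  ring_nf

theorem iteratedFDeriv_two_norm_rpow_apply {x : E} (hx : x ≠ 0) (s : ℝ) (m : Fin 2 → E) :
    iteratedFDeriv ℝ 2 (fun y : E => ‖y‖ ^ s) x m =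
      s * ‖x‖ ^ (s - 2) * inner ℝ (m 0) (m 1) +
        s * (s - 2) * ‖x‖ ^ (s - 4) * (inner ℝ x (m 0) * inner ℝ x (m 1)) := by
  have hderiv : fderiv ℝ (fun y : E => ‖y‖ ^ s) =ᶠ[nhds x]
      fun y => (s * ‖y‖ ^ (s - 2)) • innerSL ℝ y :=
    (isOpen_ne.eventually_mem hx).mono fun y hy => (hasFDerivAt_norm_rpow_of_ne_zero hy s).fderiv
  have hprod : HasFDerivAt (fun y => (s * ‖y‖ ^ (s - 2)) • innerSL ℝ y) _ x :=
    ((hasFDerivAt_norm_rpow_of_ne_zero hx (s - 2)).const_mul s).smul (innerSL ℝ).hasFDerivAt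
  rw [iteratedFDeriv_two_apply, hderiv.fderiv_eq, hprod.fderiv]
  simp only [add_apply, smul_apply, smulRight_apply, innerSL_apply_apply, smul_eq_mul]
  -- `(innerSL ℝ).hasFDerivAt` elaborates `ℝ` through its `NontriviallyNormedField` instance, not
  -- `RCLike`, so `simp` does not match the `innerSL` application coming from it.
  erw [innerSL_apply_apply]
  rw [show s - 2 - 2 = s - 4 by ring]
  ring

theorem le_iteratedFDeriv_two_norm_rpow {x : E} (hx : x ≠ 0) {s : ℝ} (hs : 1 ≤ s) (v : E) :
    (s - 1) * ‖x‖ ^ (s - 2) * ‖v‖ ^ 2 ≤ iteratedFDeriv ℝ 2 (fun y : E => ‖y‖ ^ s) x ![v, v] := by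
  have hxn : 0 < ‖x‖ := norm_pos_iff.mpr hx
  rw [iteratedFDeriv_two_norm_rpow_apply hx]
  simp only [Matrix.cons_val_zero, Matrix.cons_val_one, real_inner_self_eq_norm_sq]
  have hK : 0 ≤ ‖x‖ ^ (s - 2) * ‖v‖ ^ 2 := by positivity
  have hL : 0 ≤ ‖x‖ ^ (s - 4) := by positivity
  rcases le_total 2 s with h2s | hs2
  · have : 0 ≤ s * (s - 2) * ‖x‖ ^ (s - 4) * (inner ℝ x v * inner ℝ x v) :=
      mul_nonneg (mul_nonneg (by nlinarith) hL) (mul_self_nonneg _)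
    linarith
  · have hCS : inner ℝ x v * inner ℝ x v ≤ ‖x‖ ^ 2 * ‖v‖ ^ 2 := by
      rw [← mul_pow, ← sq]
      exact sq_le_sq' (neg_le_of_abs_le (abs_real_inner_le_norm x v)) (real_inner_le_norm x v)
    have hLK : ‖x‖ ^ (s - 4) * ‖x‖ ^ 2 = ‖x‖ ^ (s - 2) := by
      rw [← rpow_natCast, ← rpow_add hxn]; congr 1; push_cast; ring
    have hcoef : s * (s - 2) * ‖x‖ ^ (s - 4) ≤ 0 :=
      mul_nonpos_of_nonpos_of_nonneg (mul_nonpos_of_nonneg_of_nonpos (by linarith) (by linarith)) hL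
    calc (s - 1) * ‖x‖ ^ (s - 2) * ‖v‖ ^ 2
        ≤ s * (s - 1) * (‖x‖ ^ (s - 2) * ‖v‖ ^ 2) := by nlinarith [sq_nonneg (s - 1)]
      _ = s * ‖x‖ ^ (s - 2) * ‖v‖ ^ 2 + s * (s - 2) * ‖x‖ ^ (s - 4) * (‖x‖ ^ 2 * ‖v‖ ^ 2) := by
        rw [← hLK]; ring
      _ ≤ _ := by linarith [mul_le_mul_of_nonpos_left hCS hcoef]

end NormRpow

theorem le_iteratedFDeriv_two_smul_norm_rpow_add_smul_norm_rpow
    {E F : Type*} [NormedAddCommGroup E] [InnerProductSpace ℝ E]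
    [NormedAddCommGroup F] [InnerProductSpace ℝ F]
    {x : E} {y : F} (hx : x ≠ 0) (hy : y ≠ 0) {p q a b : ℝ} (hp : 1 ≤ p) (hq : 1 ≤ q)
    (ha : 0 ≤ a) (hb : 0 ≤ b) (u : E) (v : F) :
    a * ((p - 1) * ‖x‖ ^ (p - 2) * ‖u‖ ^ 2) + b * ((q - 1) * ‖y‖ ^ (q - 2) * ‖v‖ ^ 2) ≤
      iteratedFDeriv ℝ 2 (fun z : E × F => a • ‖z.1‖ ^ p + b • ‖z.2‖ ^ q) (x, y)
        ![(u, v), (u, v)] := by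
  have hfst : (fun j => (![(u, v), (u, v)] j).1) = ![u, u] := by
    funext j; fin_cases j <;> rfl
  have hsnd : (fun j => (![(u, v), (u, v)] j).2) = ![v, v] := by
    funext j; fin_cases j <;> rfl
  rw [iteratedFDeriv_fst_add_snd_apply (f := fun y => a • ‖y‖ ^ p) (g := fun y => b • ‖y‖ ^ q)
      ((contDiffAt_norm_rpow_of_ne_zero hx p).const_smul a)
      ((contDiffAt_norm_rpow_of_ne_zero hy q).const_smul b),
    iteratedFDeriv_const_smul_apply' (contDiffAt_norm_rpow_of_ne_zero hx p),
    iteratedFDeriv_const_smul_apply' (contDiffAt_norm_rpow_of_ne_zero hy q), hfst, hsnd,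
    smul_apply, smul_apply, smul_eq_mul, smul_eq_mul]
  gcongr
  · exact le_iteratedFDeriv_two_norm_rpow hx hp u
  · exact le_iteratedFDeriv_two_norm_rpow hy hq v

/-- Hessian lower bound for the Nazarov–Treil Bellman function in the region
`R₂ = {(η,ζ) : ‖η‖^p > ‖ζ‖^q, ζ ≠ 0}`. -/
theorem stmt_5 (N₁ N₂ : ℕ) (p q : ℝ) (hp : 2 ≤ p) (hq : 1 < q) (hpq : 1 / p + 1 / q = 1)
    (γ : ℝ) (hγ : γ = q * (q - 1) / 8)
    (B : EuclideanSpace ℝ (Fin N₁) × EuclideanSpace ℝ (Fin N₂) → ℝ)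
    (hB : ∀ z : EuclideanSpace ℝ (Fin N₁) × EuclideanSpace ℝ (Fin N₂),
      B z = (1 / 2) * (‖z.1‖ ^ p + ‖z.2‖ ^ q +
        γ * (2 / p * ‖z.1‖ ^ p + (2 / q - 1) * ‖z.2‖ ^ q)))
    (η : EuclideanSpace ℝ (Fin N₁)) (ζ : EuclideanSpace ℝ (Fin N₂))
    (hζ : ζ ≠ 0) (hR : ‖η‖ ^ p > ‖ζ‖ ^ q)
    (ω₁ : EuclideanSpace ℝ (Fin N₁)) (ω₂ : EuclideanSpace ℝ (Fin N₂)) :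
    (iteratedFDeriv ℝ 2 B (η, ζ)) ![(ω₁, ω₂), (ω₁, ω₂)] ≥
      (1 / 2) * ((p - 1) * ‖η‖ ^ (p - 2) * ‖ω₁‖ ^ 2
        + (q - 1) * ‖ζ‖ ^ (q - 2) * ‖ω₂‖ ^ 2) := by
  have hp0 : 0 < p := by linarith
  have hq2 : q ≤ 2 := le_two_of_two_le_of_one_div_add_one_div_eq_one hp (by linarith) hpq
  have hγ0 : 0 ≤ γ := by rw [hγ]; nlinarith
  have hη : η ≠ 0 := by
    rintro rfl
    rw [norm_zero, zero_rpow hp0.ne'] at hR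
    exact hR.not_ge (rpow_nonneg (norm_nonneg ζ) q)
  have ha : 1 / 2 ≤ (1 + γ * (2 / p)) / 2 := by
    have : 0 ≤ γ * (2 / p) := by positivity
    linarith
  have hb : 1 / 2 ≤ (1 + γ * (2 / q - 1)) / 2 := by
    have : 0 ≤ 2 / q - 1 := by rw [sub_nonneg, le_div_iff₀ (by linarith)]; linarith
    linarith [mul_nonneg hγ0 this]
  have hB_weights : B = fun z => ((1 + γ * (2 / p)) / 2) • ‖z.1‖ ^ p +
      ((1 + γ * (2 / q - 1)) / 2) • ‖z.2‖ ^ q := by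
    funext z; rw [hB, smul_eq_mul, smul_eq_mul]; ring
  have hT₁ : 0 ≤ (p - 1) * ‖η‖ ^ (p - 2) * ‖ω₁‖ ^ 2 := by
    have : 0 ≤ p - 1 := by linarith
    positivity
  have hT₂ : 0 ≤ (q - 1) * ‖ζ‖ ^ (q - 2) * ‖ω₂‖ ^ 2 := by
    have : 0 ≤ q - 1 := by linarith
    positivity
  rw [hB_weights]
  refine le_trans ?_ (le_iteratedFDeriv_two_smul_norm_rpow_add_smul_norm_rpow hη hζ
    (by linarith) hq.le (by linarith) (by linarith) ω₁ ω₂)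
  linarith [mul_le_mul_of_nonneg_right ha hT₁, mul_le_mul_of_nonneg_right hb hT₂]
end

section
/- For ε > 0 define ν_ε : (0,∞) → (0,∞) by ν_ε(t) = t·exp(−ε(t + 1/t)). Then ν_ε is C², ∫₀^∞ |ν_ε''(t)| dt < ∞ for every ε > 0, and limsup_{ε→0⁺} ∫₀^∞ |ν_ε''(t)| dt ≤ 2(1 + e^(−2)). -/
/-!
On `(0, ∞)` the function `ν_ε'` rises on `(0, a]`, falls on `[a, b]` and rises again on `[b, ∞)`,
where `a ≤ 1 < b` are the two solutions of `(t² - 1)² / t³ = 2 / ε`, and it tends to `0` at both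
ends. Hence `∫ |ν_ε''|` is the total variation `2 (ν_ε'(a) - ν_ε'(b))`. Splitting
`e^{-ε(t + 1/t)}` into factors in `εt` and `ε/t`, the elementary bounds `(1 + u) e^{-u} ≤ 1` and
`(u - 1) e^{-u} ≤ e^{-2}` give `-e^{-2} ≤ ν_ε' ≤ 1`, so the integral is at most `2 (1 + e^{-2})`
for every `ε > 0`, not only in the limit.
-/

open MeasureTheory Filter Set Topology Real

section ThreeMonotonePieces

variable {g g' : ℝ → ℝ} {a b l L M : ℝ}

theorem integrableOn_Ioc_deriv_of_nonneg_of_tendsto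
    (hderiv : ∀ x ∈ Ioc a b, HasDerivAt g (g' x) x) (hpos : ∀ x ∈ Ioo a b, 0 ≤ g' x)
    (ha : Tendsto g (𝓝[>] a) (𝓝 L)) : IntegrableOn g' (Ioc a b) := by
  classical
  have hcont : ContinuousOn (Function.update g a L) (Icc a b) := by
    intro x hx
    rcases eq_or_lt_of_le hx.1 with rfl | hax
    · rw [continuousWithinAt_update_same]
      exact ha.mono_left (nhdsWithin_mono _ fun y hy => lt_of_le_of_ne hy.1.1 (Ne.symm hy.2))
    · rw [continuousWithinAt_update_of_ne hax.ne']
      exact (hderiv x ⟨hax, hx.2⟩).continuousAt.continuousWithinAt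
  refine intervalIntegral.integrableOn_deriv_of_nonneg hcont (fun x hx => ?_) hpos
  refine (hderiv x (Ioo_subset_Ioc_self hx)).congr_of_eventuallyEq ?_
  filter_upwards [isOpen_ne.mem_nhds hx.1.ne'] with y hy using Function.update_of_ne hy _ _

theorem integral_Ioc_of_hasDerivAt_of_nonneg_of_tendsto (hab : a < b)
    (hderiv : ∀ x ∈ Ioc a b, HasDerivAt g (g' x) x) (hpos : ∀ x ∈ Ioo a b, 0 ≤ g' x)
    (ha : Tendsto g (𝓝[>] a) (𝓝 L)) : ∫ x in Ioc a b, g' x = g b - L := by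
  rw [← intervalIntegral.integral_of_le hab.le]
  exact intervalIntegral.integral_eq_sub_of_hasDerivAt_of_tendsto hab
    (fun x hx => hderiv x (Ioo_subset_Ioc_self hx))
    ((intervalIntegrable_iff_integrableOn_Ioc_of_le hab.le).2
      (integrableOn_Ioc_deriv_of_nonneg_of_tendsto hderiv hpos ha))
    ha ((hderiv b ⟨hab, le_rfl⟩).continuousAt.tendsto.mono_left nhdsWithin_le_nhds)

theorem integrableOn_and_integral_abs_deriv_Ioi_of_up_down_up (hla : l < a) (hab : a < b)
    (hderiv : ∀ x ∈ Ioi l, HasDerivAt g (g' x) x) (hup₁ : ∀ x ∈ Ioc l a, 0 ≤ g' x)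
    (hdown : ∀ x ∈ Ioc a b, g' x ≤ 0) (hup₂ : ∀ x ∈ Ioi b, 0 ≤ g' x)
    (hl : Tendsto g (𝓝[>] l) (𝓝 L)) (htop : Tendsto g atTop (𝓝 M)) :
    IntegrableOn g' (Ioi l) ∧ ∫ x in Ioi l, |g' x| = 2 * (g a - g b) + M - L := by
  have hderiv₁ : ∀ x ∈ Ioc l a, HasDerivAt g (g' x) x := fun x hx => hderiv x hx.1
  have hderiv₂ : ∀ x ∈ Ioc a b, HasDerivAt (-g) (-g' x) x :=
    fun x hx => (hderiv x (hla.trans hx.1)).neg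
  have hderiv₃ : ∀ x ∈ Ici b, HasDerivAt g (g' x) x :=
    fun x hx => hderiv x (hla.trans (hab.trans_le hx))
  have hpos₂ : ∀ x ∈ Ioo a b, 0 ≤ -g' x :=
    fun x hx => neg_nonneg.2 (hdown x (Ioo_subset_Ioc_self hx))
  have hga : Tendsto (-g) (𝓝[>] a) (𝓝 (-g a)) :=
    (hderiv a hla).continuousAt.neg.tendsto.mono_left nhdsWithin_le_nhds
  have hint₁ : IntegrableOn g' (Ioc l a) := integrableOn_Ioc_deriv_of_nonneg_of_tendsto hderiv₁
    (fun x hx => hup₁ x (Ioo_subset_Ioc_self hx)) hl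
  have hint₂ : IntegrableOn g' (Ioc a b) := by
    simpa using (integrableOn_Ioc_deriv_of_nonneg_of_tendsto hderiv₂ hpos₂ hga).neg
  have hint₃ : IntegrableOn g' (Ioi b) := integrableOn_Ioi_deriv_of_nonneg' hderiv₃ hup₂ htop
  have hint₁₂ : IntegrableOn g' (Ioc l b) := by
    rw [← Ioc_union_Ioc_eq_Ioc hla.le hab.le]
    exact hint₁.union hint₂
  refine ⟨by simpa [Ioc_union_Ioi_eq_Ioi (hla.trans hab).le] using hint₁₂.union hint₃, ?_⟩
  have h₁ : ∫ x in Ioc l a, |g' x| = g a - L := by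
    rw [setIntegral_congr_fun measurableSet_Ioc fun x hx => abs_of_nonneg (hup₁ x hx)]
    exact integral_Ioc_of_hasDerivAt_of_nonneg_of_tendsto hla hderiv₁
      (fun x hx => hup₁ x (Ioo_subset_Ioc_self hx)) hl
  have h₂ : ∫ x in Ioc a b, |g' x| = g a - g b := by
    rw [setIntegral_congr_fun measurableSet_Ioc fun x hx => abs_of_nonpos (hdown x hx)]
    have := integral_Ioc_of_hasDerivAt_of_nonneg_of_tendsto hab hderiv₂ hpos₂ hga
    simp only [Pi.neg_apply] at this
    linarith
  have h₃ : ∫ x in Ioi b, |g' x| = M - g b := by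
    rw [setIntegral_congr_fun measurableSet_Ioi fun x hx => abs_of_nonneg (hup₂ x hx)]
    exact integral_Ioi_of_hasDerivAt_of_nonneg' hderiv₃ hup₂ htop
  rw [← Ioc_union_Ioi_eq_Ioi (hla.trans hab).le,
    setIntegral_union Ioc_disjoint_Ioi_same measurableSet_Ioi hint₁₂.abs hint₃.abs,
    ← Ioc_union_Ioc_eq_Ioc hla.le hab.le,
    setIntegral_union (Ioc_disjoint_Ioc_of_le le_rfl) measurableSet_Ioc hint₁.abs hint₂.abs,
    h₁, h₂, h₃]
  ring

end ThreeMonotonePieces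

theorem one_add_mul_exp_neg_le_one (u : ℝ) : (1 + u) * exp (-u) ≤ 1 := by
  have := mul_le_mul_of_nonneg_right (add_one_le_exp u) (exp_pos (-u)).le
  rwa [add_comm u, ← exp_add, add_neg_cancel, exp_zero] at this

theorem sub_one_mul_exp_neg_le (u : ℝ) : (u - 1) * exp (-u) ≤ exp (-2) := by
  have := mul_le_mul_of_nonneg_right (add_one_le_exp (u - 2)) (exp_pos (-u)).le
  rwa [← exp_add, show u - 2 + -u = -2 by ring, show u - 2 + 1 = u - 1 by ring] at this

theorem tendsto_one_add_mul_exp_neg_atTop :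
    Tendsto (fun u : ℝ => (1 + u) * exp (-u)) atTop (𝓝 0) := by
  simpa [add_mul] using tendsto_exp_neg_atTop_nhds_zero.add
    (tendsto_pow_mul_exp_neg_atTop_nhds_zero 1)

theorem tendsto_add_one_div_nhdsGT_zero : Tendsto (fun t : ℝ => t + 1 / t) (𝓝[>] 0) atTop := by
  have h : Tendsto (fun t : ℝ => 1 / t) (𝓝[>] 0) atTop := by
    simpa using tendsto_inv_nhdsGT_zero
  refine h.zero_eventuallyLE_add_atTop ?_
  filter_upwards [self_mem_nhdsWithin] with t ht using le_of_lt ht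

theorem tendsto_add_one_div_atTop : Tendsto (fun t : ℝ => t + 1 / t) atTop atTop := by
  refine tendsto_id.atTop_add_zero_eventuallyLE ?_
  filter_upwards [eventually_gt_atTop 0] with t ht using by positivity

noncomputable def nu (ε t : ℝ) : ℝ := t * exp (-(ε * (t + 1 / t)))

noncomputable def nuDeriv (ε t : ℝ) : ℝ := exp (-(ε * (t + 1 / t))) * (1 - ε * (t - 1 / t))

noncomputable def nuRatio (t : ℝ) : ℝ := (t ^ 2 - 1) ^ 2 / t ^ 3

noncomputable def nuDeriv2 (ε t : ℝ) : ℝ :=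
  ε * exp (-(ε * (t + 1 / t))) * (ε * nuRatio t - 2)

section Derivatives

variable (ε : ℝ) {t : ℝ}

theorem hasDerivAt_exp_neg_mul_add_one_div (ht : t ≠ 0) :
    HasDerivAt (fun t => exp (-(ε * (t + 1 / t))))
      (exp (-(ε * (t + 1 / t))) * (-(ε * (1 - 1 / t ^ 2)))) t := by
  have h : HasDerivAt (fun t : ℝ => t + 1 / t) (1 - 1 / t ^ 2) t := by
    simp only [one_div]
    exact ((hasDerivAt_id' t).add (hasDerivAt_inv ht)).congr_deriv (by ring)
  exact ((h.const_mul ε).neg).exp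

theorem hasDerivAt_nu (ht : t ≠ 0) : HasDerivAt (nu ε) (nuDeriv ε t) t := by
  refine ((hasDerivAt_id t).mul (hasDerivAt_exp_neg_mul_add_one_div ε ht)).congr_deriv ?_
  simp only [id_eq, nuDeriv]
  field_simp
  ring

theorem hasDerivAt_nuDeriv (ht : t ≠ 0) : HasDerivAt (nuDeriv ε) (nuDeriv2 ε t) t := by
  have h : HasDerivAt (fun t : ℝ => 1 - ε * (t - 1 / t)) (-(ε * (1 + 1 / t ^ 2))) t := by
    simpa [one_div] using (((hasDerivAt_id t).sub (hasDerivAt_inv ht)).const_mul ε).const_sub 1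
  refine ((hasDerivAt_exp_neg_mul_add_one_div ε ht).mul h).congr_deriv ?_
  simp only [nuDeriv2, nuRatio]
  field_simp
  ring

theorem deriv_deriv_nu (ht : t ≠ 0) : deriv (deriv (nu ε)) t = nuDeriv2 ε t := by
  have h : deriv (nu ε) =ᶠ[𝓝 t] nuDeriv ε := by
    filter_upwards [isOpen_ne.mem_nhds ht] with s hs using (hasDerivAt_nu ε hs).deriv
  rw [h.deriv_eq, (hasDerivAt_nuDeriv ε ht).deriv]

theorem contDiffOn_nu : ContDiffOn ℝ 2 (nu ε) (Ioi 0) := by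
  unfold nu
  fun_prop (disch := exact fun _ hx => ne_of_gt hx)

end Derivatives

section Bounds

variable {ε t : ℝ}

theorem exp_neg_mul_add_one_div (ε t : ℝ) :
    exp (-(ε * (t + 1 / t))) = exp (-(ε * t)) * exp (-(ε * (1 / t))) := by
  rw [← exp_add]
  ring_nf

theorem abs_nuDeriv_le (hε : 0 ≤ ε) (ht : 0 < t) :
    |nuDeriv ε t| ≤ (1 + ε * (t + 1 / t)) * exp (-(ε * (t + 1 / t))) := by
  rw [nuDeriv, abs_mul, abs_of_pos (exp_pos _), mul_comm]
  gcongr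
  have : 0 ≤ ε * t := by positivity
  have : 0 ≤ ε * (1 / t) := by positivity
  rw [abs_le]
  constructor <;> nlinarith

theorem tendsto_nuDeriv_of_tendsto_add_one_div {l : Filter ℝ} (hε : 0 < ε)
    (hpos : ∀ᶠ t in l, 0 < t) (h : Tendsto (fun t => t + 1 / t) l atTop) :
    Tendsto (nuDeriv ε) l (𝓝 0) := by
  refine squeeze_zero_norm' ?_
    (tendsto_one_add_mul_exp_neg_atTop.comp ((tendsto_const_mul_atTop_of_pos hε).2 h))
  filter_upwards [hpos] with t ht using abs_nuDeriv_le hε.le ht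

theorem nuDeriv_le_one (hε : 0 ≤ ε) (ht : 0 < t) : nuDeriv ε t ≤ 1 := by
  have hx : exp (-(ε * t)) ≤ 1 := exp_le_one_iff.2 (by nlinarith)
  have hy := one_add_mul_exp_neg_le_one (ε * (1 / t))
  have hy₀ : 0 ≤ (1 + ε * (1 / t)) * exp (-(ε * (1 / t))) := by positivity
  have hxy : 0 ≤ ε * t * (exp (-(ε * t)) * exp (-(ε * (1 / t)))) := by positivity
  rw [nuDeriv, exp_neg_mul_add_one_div]
  nlinarith

theorem neg_exp_neg_two_le_nuDeriv (hε : 0 ≤ ε) (ht : 0 < t) : -exp (-2) ≤ nuDeriv ε t := by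
  have hy : exp (-(ε * (1 / t))) ≤ 1 := exp_le_one_iff.2 (by simp only [neg_nonpos]; positivity)
  have hx := mul_le_mul_of_nonneg_left (sub_one_mul_exp_neg_le (ε * t))
    (exp_pos (-(ε * (1 / t)))).le
  have hxy : 0 ≤ ε * (1 / t) * (exp (-(ε * t)) * exp (-(ε * (1 / t)))) := by positivity
  rw [nuDeriv, exp_neg_mul_add_one_div]
  nlinarith [exp_pos (-2)]

end Bounds

theorem hasDerivAt_nuRatio {t : ℝ} (ht : t ≠ 0) :
    HasDerivAt nuRatio ((t ^ 2 + 3) * (t ^ 2 - 1) / t ^ 4) t := by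
  have hnum : HasDerivAt (fun t : ℝ => (t ^ 2 - 1) ^ 2) (2 * (t ^ 2 - 1) * (2 * t)) t :=
    (((hasDerivAt_pow 2 t).sub_const 1).pow 2).congr_deriv (by ring)
  refine (hnum.div (hasDerivAt_pow 3 t) (pow_ne_zero 3 ht)).congr_deriv ?_
  field_simp
  ring

theorem differentiableOn_nuRatio : DifferentiableOn ℝ nuRatio (Ioi 0) :=
  fun _ ht => (hasDerivAt_nuRatio (ne_of_gt ht)).differentiableAt.differentiableWithinAt

theorem continuousOn_nuRatio : ContinuousOn nuRatio (Ioi 0) :=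
  differentiableOn_nuRatio.continuousOn

theorem antitoneOn_nuRatio : AntitoneOn nuRatio (Ioc 0 1) := by
  refine antitoneOn_of_deriv_nonpos (convex_Ioc 0 1) (continuousOn_nuRatio.mono Ioc_subset_Ioi_self)
    (differentiableOn_nuRatio.mono (interior_subset.trans Ioc_subset_Ioi_self))
    fun t ht => ?_
  obtain ⟨ht₀, ht₁⟩ := interior_subset ht
  rw [(hasDerivAt_nuRatio ht₀.ne').deriv]
  have : t ^ 2 ≤ 1 := by nlinarith
  exact div_nonpos_of_nonpos_of_nonneg (by nlinarith) (by positivity)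

theorem monotoneOn_nuRatio : MonotoneOn nuRatio (Ici 1) := by
  have hpos : Ici (1 : ℝ) ⊆ Ioi 0 := Ici_subset_Ioi.2 one_pos
  refine monotoneOn_of_deriv_nonneg (convex_Ici 1) (continuousOn_nuRatio.mono hpos)
    (differentiableOn_nuRatio.mono (interior_subset.trans hpos))
    fun t ht => ?_
  have ht₁ : 1 ≤ t := interior_subset ht
  rw [(hasDerivAt_nuRatio (hpos ht₁).ne').deriv]
  have : 1 ≤ t ^ 2 := by nlinarith
  exact div_nonneg (by nlinarith) (by positivity)

theorem tendsto_nuRatio_nhdsGT_zero : Tendsto nuRatio (𝓝[>] 0) atTop := by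
  have h : Tendsto (fun t : ℝ => (t ^ 2 - 1) ^ 2) (𝓝[>] 0) (𝓝 1) :=
    ((by fun_prop : Continuous fun t : ℝ => (t ^ 2 - 1) ^ 2).tendsto' 0 1 (by norm_num)).mono_left
      nhdsWithin_le_nhds
  have hinv : Tendsto (fun t : ℝ => t⁻¹ ^ 3) (𝓝[>] 0) atTop :=
    (tendsto_pow_atTop three_ne_zero).comp tendsto_inv_nhdsGT_zero
  refine (hinv.atTop_mul_pos one_pos h).congr fun t => ?_
  rw [nuRatio, inv_pow, inv_mul_eq_div]

theorem tendsto_nuRatio_atTop : Tendsto nuRatio atTop atTop := by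
  have h : Tendsto (fun t : ℝ => (1 - t⁻¹ ^ 2) ^ 2) atTop (𝓝 1) := by
    simpa using (((tendsto_inv_atTop_zero (𝕜 := ℝ)).pow 2).const_sub 1).pow 2
  refine (tendsto_id.atTop_mul_pos one_pos h).congr' ?_
  filter_upwards [eventually_ne_atTop 0] with t ht
  rw [nuRatio, id]
  field_simp

theorem exists_nuRatio_eq {c : ℝ} (hc : 0 < c) :
    ∃ a b, 0 < a ∧ a ≤ 1 ∧ 1 < b ∧ nuRatio a = c ∧ nuRatio b = c := by
  have h₁ : nuRatio 1 = 0 := by norm_num [nuRatio]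
  obtain ⟨a, ha, hac⟩ := isPreconnected_Ioc.intermediate_value_Ici (right_mem_Ioc.2 one_pos)
    (le_principal_iff.2 (Ioc_mem_nhdsGT one_pos))
    (continuousOn_nuRatio.mono Ioc_subset_Ioi_self) tendsto_nuRatio_nhdsGT_zero
    (show nuRatio 1 ≤ c by linarith)
  obtain ⟨b, hb, hbc⟩ := isPreconnected_Ici.intermediate_value_Ici self_mem_Ici
    (le_principal_iff.2 (Ici_mem_atTop 1))
    (continuousOn_nuRatio.mono (Ici_subset_Ioi.2 one_pos)) tendsto_nuRatio_atTop
    (show nuRatio 1 ≤ c by linarith)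
  refine ⟨a, b, ha.1, ha.2, lt_of_le_of_ne hb ?_, hac, hbc⟩
  rintro rfl
  linarith

section TotalVariation

variable {ε t : ℝ}

theorem nuDeriv2_nonneg (hε : 0 < ε) (h : 2 / ε ≤ nuRatio t) : 0 ≤ nuDeriv2 ε t := by
  have : 2 ≤ ε * nuRatio t := (div_le_iff₀' hε).1 h
  unfold nuDeriv2
  exact mul_nonneg (by positivity) (by linarith)

theorem nuDeriv2_nonpos (hε : 0 < ε) (h : nuRatio t ≤ 2 / ε) : nuDeriv2 ε t ≤ 0 := by
  have : ε * nuRatio t ≤ 2 := (le_div_iff₀' hε).1 h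
  unfold nuDeriv2
  exact mul_nonpos_of_nonneg_of_nonpos (by positivity) (by linarith)

theorem integrableOn_nuDeriv2_and_integral_abs_le (hε : 0 < ε) :
    IntegrableOn (nuDeriv2 ε) (Ioi 0) ∧
      ∫ t in Ioi 0, |nuDeriv2 ε t| ≤ 2 * (1 + exp (-2)) := by
  obtain ⟨a, b, ha₀, ha₁, hb₁, hra, hrb⟩ := exists_nuRatio_eq (div_pos two_pos hε)
  have hb₀ : 0 < b := one_pos.trans hb₁
  have hdown : ∀ t ∈ Ioc a b, nuDeriv2 ε t ≤ 0 := by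
    refine fun t ht => nuDeriv2_nonpos hε ?_
    rcases le_or_gt t 1 with h | h
    · exact hra ▸ antitoneOn_nuRatio ⟨ha₀, ha₁⟩ ⟨ha₀.trans ht.1, h⟩ ht.1.le
    · exact hrb ▸ monotoneOn_nuRatio h.le hb₁.le ht.2
  have hup₁ : ∀ t ∈ Ioc 0 a, 0 ≤ nuDeriv2 ε t := fun t ht => nuDeriv2_nonneg hε
    (hra ▸ antitoneOn_nuRatio ⟨ht.1, ht.2.trans ha₁⟩ ⟨ha₀, ha₁⟩ ht.2)
  have hup₂ : ∀ t ∈ Ioi b, 0 ≤ nuDeriv2 ε t := fun t ht => nuDeriv2_nonneg hε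
    (hrb ▸ monotoneOn_nuRatio hb₁.le (hb₁.trans ht).le ht.le)
  obtain ⟨hint, heq⟩ := integrableOn_and_integral_abs_deriv_Ioi_of_up_down_up ha₀
    (ha₁.trans_lt hb₁) (fun t ht => hasDerivAt_nuDeriv ε (ne_of_gt ht)) hup₁ hdown hup₂
    (tendsto_nuDeriv_of_tendsto_add_one_div hε self_mem_nhdsWithin tendsto_add_one_div_nhdsGT_zero)
    (tendsto_nuDeriv_of_tendsto_add_one_div hε (eventually_gt_atTop 0) tendsto_add_one_div_atTop)
  refine ⟨hint, ?_⟩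
  rw [heq]
  linarith [nuDeriv_le_one hε.le ha₀, neg_exp_neg_two_le_nuDeriv hε.le hb₀]

end TotalVariation

theorem stmt_12 (ν : ℝ → ℝ → ℝ)
    (hν : ∀ ε t : ℝ, ν ε t = t * Real.exp (-(ε * (t + 1 / t)))) :
    (∀ ε : ℝ, 0 < ε → ContDiffOn ℝ 2 (ν ε) (Set.Ioi (0 : ℝ))) ∧
    (∀ ε : ℝ, 0 < ε →
      IntegrableOn (fun t => |deriv (deriv (ν ε)) t|) (Set.Ioi (0 : ℝ))) ∧
    limsup (fun ε : ℝ => ∫ t in Set.Ioi (0 : ℝ), |deriv (deriv (ν ε)) t|)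
        (nhdsWithin 0 (Set.Ioi (0 : ℝ))) ≤ 2 * (1 + Real.exp (-2)) := by
  have hν_eq : ∀ ε, ν ε = nu ε := fun ε => funext (hν ε)
  have hderiv2 :
      ∀ ε, EqOn (fun t => |deriv (deriv (ν ε)) t|) (fun t => |nuDeriv2 ε t|) (Ioi 0) :=
    fun ε t ht => by simp only [hν_eq, deriv_deriv_nu ε (ne_of_gt ht)]
  refine ⟨fun ε _ => hν_eq ε ▸ contDiffOn_nu ε, fun ε hε => ?_, ?_⟩
  · exact IntegrableOn.congr_fun (integrableOn_nuDeriv2_and_integral_abs_le hε).1.abs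
      (hderiv2 ε).symm measurableSet_Ioi
  · refine limsup_le_of_le
      (isCoboundedUnder_le_of_le _ fun _ => integral_nonneg fun _ => abs_nonneg _) ?_
    filter_upwards [self_mem_nhdsWithin] with ε hε
    rw [setIntegral_congr_fun measurableSet_Ioi (hderiv2 ε)]
    exact (integrableOn_nuDeriv2_and_integral_abs_le hε).2
end
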